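/- Let w : ι → ℝ be a finite family of positive weights, L(t) = ∑_x (1 - exp(-w_x t)), S = ∑_x w_x and M = max_x w_x. Then for all t > 0, L(t) ≥ (1 - 1/e) · S · min(1/M, t). -/

import Mathlib

/-!
Since `u ↦ 1 - exp (-u)` is concave, it lies above its chord on `[0, 1]` and is increasing beyond,
so `1 - exp (-u) ≥ (1 - e⁻¹) · min 1 u` for `u ≥ 0`. Apply this to `u = w x · t`, note that
`w x · min (1/M) t ≤ min 1 (w x · t)` because `w x ≤ M`, and sum over `x`.
-/

open Real

lemma exp_neg_le_chord {u : ℝ} (hu₀ : 0 ≤ u) (hu₁ : u ≤ 1) :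
    exp (-u) ≤ 1 - u * (1 - exp (-1)) := by
  have h := convexOn_exp.2 (Set.mem_univ 0) (Set.mem_univ (-1)) (sub_nonneg.2 hu₁) hu₀
    (sub_add_cancel 1 u)
  simp only [smul_eq_mul, mul_zero, zero_add, exp_zero, mul_one, mul_neg] at h
  linarith

lemma one_sub_exp_neg_one_mul_min_le {u : ℝ} (hu : 0 ≤ u) :
    (1 - exp (-1)) * min 1 u ≤ 1 - exp (-u) := by
  rcases le_total u 1 with hu₁ | hu₁
  · rw [min_eq_right hu₁]
    linarith [exp_neg_le_chord hu hu₁]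
  · rw [min_eq_left hu₁, mul_one]
    linarith [exp_le_exp.2 (neg_le_neg hu₁)]

lemma mul_min_inv_le_min_one_mul {w M : ℝ} (hw : 0 ≤ w) (hwM : w ≤ M) (t : ℝ) :
    w * min (1 / M) t ≤ min 1 (w * t) := by
  rw [mul_min_of_nonneg _ _ hw, mul_one_div]
  exact min_le_min_right _ (div_le_one_of_le₀ hwM (hw.trans hwM))

theorem complement_laplace_lower_bound
    {ι : Type*} [Fintype ι] (w : ι → ℝ) (hw : ∀ x, 0 < w x)
    (M : ℝ) (hM : IsGreatest (Set.range w) M) :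
    ∀ t : ℝ, 0 < t →
      (1 - 1 / Real.exp 1) * (∑ x, w x) * min (1 / M) t ≤
        ∑ x, (1 - Real.exp (-(w x) * t)) := by
  intro t ht
  have hc : 0 ≤ 1 - exp (-1) := sub_nonneg.2 (exp_le_one_iff.2 (by norm_num))
  rw [one_div, ← exp_neg, mul_assoc, Finset.sum_mul, Finset.mul_sum]
  refine Finset.sum_le_sum fun x _ => ?_
  calc (1 - exp (-1)) * (w x * min (1 / M) t)
      ≤ (1 - exp (-1)) * min 1 (w x * t) :=
        mul_le_mul_of_nonneg_left (mul_min_inv_le_min_one_mul (hw x).le (hM.2 ⟨x, rfl⟩) t) hc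
    _ ≤ 1 - exp (-(w x) * t) := by
        rw [neg_mul]
        exact one_sub_exp_neg_one_mul_min_le (mul_nonneg (hw x).le ht.le)
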